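/- Let H₁, H₂ be Hermitian operators on ℂ^N, let λ₁,…,λ_N be the eigenvalues of H₂ with corresponding orthonormal eigenvectors ψ₁,…,ψ_N, and assume: (1) (H₁ψ_k, ψ_j) ≠ 0 for all k ≠ j; (2) λ_k − λ_l ≠ λ_{k'} − λ_{l'} for any ordered pairs (k,l) ≠ (k',l') with k≠l, k'≠l'. Then for the Lie algebra ℒ = ℒ(H₁,H₂): if Tr(H₁) = Tr(H₂) = 0 then ℒ equals the subalgebra of all Hermitian operators with zero trace; otherwise ℒ equals the space 𝒪 of all Hermitian operators on ℂ^N. -/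

import Mathlib

open Matrix MeasureTheory Filter Topology
open scoped ENNReal

/-- The Borel measurable space structure on matrices (entrywise). -/
instance matrixMeasurableSpace {m n α : Type*} [MeasurableSpace α] :
    MeasurableSpace (Matrix m n α) := MeasurableSpace.pi

/-- `Uexp H t = e^{-itH}`, the unitary evolution generated by the Hermitian operator `H`. -/
noncomputable def Uexp {N : ℕ} (H : Matrix (Fin N) (Fin N) ℂ) (t : ℝ) :
    Matrix (Fin N) (Fin N) ℂ :=
  NormedSpace.exp ((-(Complex.I * t)) • H)

/-- The alternating product `J_n(s₁,…,s_n) = ⋯ U₂^{s₂} U₁^{s₁}`, where the `k`-th factor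
(counting from the right, `k = 1,…,n`) is `e^{-i s_k H₁}` for odd `k` and `e^{-i s_k H₂}`
for even `k`; here `s k` denotes `s_{k+1}`. -/
noncomputable def Jalt {N : ℕ} (H₁ H₂ : Matrix (Fin N) (Fin N) ℂ) :
    ℕ → (ℕ → ℝ) → Matrix (Fin N) (Fin N) ℂ
  | 0, _ => 1
  | n + 1, s => Uexp (if n % 2 = 0 then H₁ else H₂) (s n) * Jalt H₁ H₂ n s

/-- The pair `(H₁, H₂)` satisfies the `U`-controllability condition: for some `n`, the set
`𝒥_n(H₁,H₂)` of all alternating products with nonnegative times equals the whole unitary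
group `U(N)`. -/
def UControllable {N : ℕ} (H₁ H₂ : Matrix (Fin N) (Fin N) ℂ) : Prop :=
  ∃ n : ℕ, {M : Matrix (Fin N) (Fin N) ℂ | ∃ s : ℕ → ℝ, (∀ i, 0 ≤ s i) ∧ Jalt H₁ H₂ n s = M}
    = {M : Matrix (Fin N) (Fin N) ℂ | M ∈ Matrix.unitaryGroup (Fin N) ℂ}

/-- `ℒ(H₁,H₂)`: the smallest real subspace of operators containing `H₁, H₂` and closed under
the bracket `{A,B} = i[A,B]`. -/
noncomputable def LieDynAlg {N : ℕ} (H₁ H₂ : Matrix (Fin N) (Fin N) ℂ) :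
    Submodule ℝ (Matrix (Fin N) (Fin N) ℂ) :=
  sInf {p | H₁ ∈ p ∧ H₂ ∈ p ∧ ∀ A ∈ p, ∀ B ∈ p, Complex.I • (A * B - B * A) ∈ p}


/-! Conjugating by the unitary matrix `U` whose columns are the `ψ k` turns `H₂` into the real
diagonal matrix `D = diag λ` and `H₁` into a Hermitian `G` with nonzero off-diagonal entries.
The map `ad_D = i[D, ·]` multiplies the `(k, l)` entry by `i (λ_k - λ_l)`. These numbers are
distinct for `k ≠ l` and stable under conjugation, so Lagrange interpolation yields real
polynomials `P` for which `(ad_D P(ad_D)) G` is the off-diagonal part of any prescribed Hermitian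
matrix. The bracket of two such matrices supported on `{k, l}` is a multiple of `E_kk - E_ll`, and
these span the traceless real diagonal matrices. Hence `ℒ(H₁, H₂)` contains every traceless
Hermitian matrix; brackets are traceless, so one element of nonzero trace decides between the two
cases. -/

open scoped Polynomial ComplexConjugate

theorem Polynomial.exists_aeval_real_eq_of_conj {α : Type*} [DecidableEq α] (s : Finset α)
    {v r : α → ℂ} (hv : Set.InjOn v s)
    (hconj : ∀ x ∈ s, ∃ y ∈ s, v y = conj (v x) ∧ r y = conj (r x)) :
    ∃ P : ℝ[X], ∀ x ∈ s, aeval (v x) P = r x := by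
  set Q := Lagrange.interpolate s v r
  have hQ : Q.map (starRingEnd ℂ) = Q := by
    refine Lagrange.eq_interpolate_of_eval_eq r hv
      (degree_map_le.trans_lt (Lagrange.degree_interpolate_lt r hv)) fun x hx => ?_
    obtain ⟨y, hy, hvy, hry⟩ := hconj x hx
    have hvx : v x = conj (v y) := by rw [hvy, Complex.conj_conj]
    rw [eval_map, hvx, eval₂_at_apply, Lagrange.eval_interpolate_at_node r hv hy, hry,
      Complex.conj_conj]
  have hlift : Q ∈ lifts (algebraMap ℝ ℂ) := by
    refine (lifts_iff_coeff_lifts Q).2 fun n => ?_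
    obtain ⟨t, ht⟩ := Complex.conj_eq_iff_real.1 (by simpa using congrArg (coeff · n) hQ)
    exact ⟨t, ht.symm⟩
  obtain ⟨P, hP⟩ := (mem_lifts Q).1 hlift
  exact ⟨P, fun x hx => by
    rw [aeval_def, eval₂_eq_eval_map, hP, Lagrange.eval_interpolate_at_node r hv hx]⟩

namespace Matrix

open Polynomial (aeval aeval_X)

variable {ι : Type*}

section Single

variable [DecidableEq ι]

lemma isHermitian_single_add_single_conj (k l : ι) (a : ℂ) :
    (single k l a + single l k (conj a)).IsHermitian := by
  simp [IsHermitian, conjTranspose_add, conjTranspose_single, add_comm]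

lemma diag_single_add_single {k l : ι} (hkl : k ≠ l) (a b : ℂ) :
    (single k l a + single l k b).diag = 0 := by
  ext i
  simp only [diag_apply, add_apply, single_apply, Pi.zero_apply]
  grind

end Single

def ofCols {m α : Type*} (ψ : ι → m → α) : Matrix m ι α :=
  of fun i k => ψ k i

variable [Fintype ι]

theorem IsHermitian.I_smul_commutator {A B : Matrix ι ι ℂ} (hA : A.IsHermitian)
    (hB : B.IsHermitian) : (Complex.I • (A * B - B * A)).IsHermitian := by
  rw [IsHermitian, conjTranspose_smul, conjTranspose_sub, conjTranspose_mul, conjTranspose_mul,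
    hA.eq, hB.eq, Complex.star_def, Complex.conj_I, neg_smul, ← smul_neg, neg_sub]

theorem trace_I_smul_commutator (A B : Matrix ι ι ℂ) :
    (Complex.I • (A * B - B * A)).trace = 0 := by
  rw [trace_smul, trace_sub, trace_mul_comm, sub_self, smul_zero]

def BracketClosed (p : Submodule ℝ (Matrix ι ι ℂ)) : Prop :=
  ∀ A ∈ p, ∀ B ∈ p, Complex.I • (A * B - B * A) ∈ p

theorem bracketClosed_selfAdjoint : BracketClosed (selfAdjoint.submodule ℝ (Matrix ι ι ℂ)) :=
  fun _ hA _ hB => (hA.isHermitian.I_smul_commutator hB.isHermitian).isSelfAdjoint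

theorem bracketClosed_selfAdjoint_inf_ker_trace :
    BracketClosed (selfAdjoint.submodule ℝ (Matrix ι ι ℂ) ⊓
      LinearMap.ker ((traceLinearMap ι ℂ ℂ).restrictScalars ℝ)) :=
  fun A hA B hB => ⟨bracketClosed_selfAdjoint A hA.1 B hB.1, trace_I_smul_commutator A B⟩

lemma conjTranspose_ofCols_mul_mul_ofCols_apply (ψ : ι → ι → ℂ) (M : Matrix ι ι ℂ) (k l : ι) :
    ((ofCols ψ)ᴴ * M * ofCols ψ) k l = star (ψ k) ⬝ᵥ (M *ᵥ ψ l) := by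
  simp only [ofCols, mul_apply, conjTranspose_apply, of_apply, dotProduct, mulVec,
    Pi.star_apply, Finset.sum_mul, Finset.mul_sum]
  rw [Finset.sum_comm]
  exact Finset.sum_congr rfl fun a _ => Finset.sum_congr rfl fun b _ => by ring

lemma IsHermitian.ofReal_re_trace {A : Matrix ι ι ℂ} (hA : A.IsHermitian) :
    (A.trace.re : ℂ) = A.trace :=
  Complex.conj_eq_iff_re.1 (by rw [← Complex.star_def, ← trace_conjTranspose, hA.eq])

variable {p : Submodule ℝ (Matrix ι ι ℂ)}

theorem mem_of_isHermitian_of_trace_ne_zero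
    (hsu : ∀ X : Matrix ι ι ℂ, X.IsHermitian → X.trace = 0 → X ∈ p)
    {H : Matrix ι ι ℂ} (hH : H ∈ p) (hHh : H.IsHermitian) (htr : H.trace ≠ 0)
    {A : Matrix ι ι ℂ} (hA : A.IsHermitian) : A ∈ p := by
  have hre : H.trace.re ≠ 0 := fun h => htr (by rw [← hHh.ofReal_re_trace, h, Complex.ofReal_zero])
  set c : ℝ := A.trace.re / H.trace.re
  have hc : (A - c • H).trace = 0 := by
    rw [trace_sub, trace_smul, ← hA.ofReal_re_trace, ← hHh.ofReal_re_trace, Complex.real_smul,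
      ← Complex.ofReal_mul, div_mul_cancel₀ _ hre, sub_self]
  rw [← sub_add_cancel A (c • H)]
  exact p.add_mem (hsu _ (hA.sub (hHh.smul (IsSelfAdjoint.all c))) hc) (p.smul_mem c hH)

variable [DecidableEq ι]

theorem ofCols_mem_unitaryGroup {ψ : ι → ι → ℂ}
    (horth : ∀ k l, star (ψ k) ⬝ᵥ ψ l = if k = l then 1 else 0) :
    ofCols ψ ∈ unitaryGroup ι ℂ := by
  rw [mem_unitaryGroup_iff', star_eq_conjTranspose, ← Matrix.mul_one (ofCols ψ)ᴴ]
  ext k l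
  rw [conjTranspose_ofCols_mul_mul_ofCols_apply, one_mulVec, horth, one_apply]

theorem conjTranspose_ofCols_mul_mul_ofCols_eq_diagonal {ψ : ι → ι → ℂ} {H : Matrix ι ι ℂ}
    {lam : ι → ℝ} (horth : ∀ k l, star (ψ k) ⬝ᵥ ψ l = if k = l then 1 else 0)
    (heig : ∀ k, H *ᵥ ψ k = (lam k : ℂ) • ψ k) :
    (ofCols ψ)ᴴ * H * ofCols ψ = diagonal fun k => (lam k : ℂ) := by
  ext k l
  rw [conjTranspose_ofCols_mul_mul_ofCols_apply, heig, dotProduct_smul, horth, diagonal_apply]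
  split_ifs with hkl
  · rw [hkl, smul_eq_mul, mul_one]
  · rw [smul_zero]

theorem BracketClosed.comap {κ : Type*} [Fintype κ] [DecidableEq κ] (hp : BracketClosed p)
    (f : Matrix κ κ ℂ →ₐ[ℂ] Matrix ι ι ℂ) :
    BracketClosed (p.comap (f.toLinearMap.restrictScalars ℝ)) := by
  intro A hA B hB
  simpa only [Submodule.mem_comap, LinearMap.restrictScalars_apply, AlgHom.toLinearMap_apply,
    map_smul, map_sub, map_mul] using hp _ hA _ hB

noncomputable def adDiagonal (d : ι → ℝ) : Module.End ℝ (Matrix ι ι ℂ) :=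
  Complex.I • (LinearMap.mulLeft ℝ (diagonal fun k => (d k : ℂ)) -
    LinearMap.mulRight ℝ (diagonal fun k => (d k : ℂ)))

lemma adDiagonal_apply (d : ι → ℝ) (X : Matrix ι ι ℂ) :
    adDiagonal d X =
      Complex.I • (diagonal (fun k => (d k : ℂ)) * X - X * diagonal fun k => (d k : ℂ)) :=
  rfl

lemma adDiagonal_apply_apply (d : ι → ℝ) (X : Matrix ι ι ℂ) (k l : ι) :
    adDiagonal d X k l = Complex.I * (d k - d l) * X k l := by
  simp only [adDiagonal_apply, smul_apply, sub_apply, diagonal_mul, mul_diagonal, smul_eq_mul]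
  ring

lemma aeval_adDiagonal_apply_apply (d : ι → ℝ) (P : ℝ[X]) (X : Matrix ι ι ℂ) (k l : ι) :
    aeval (adDiagonal d) P X k l = aeval (Complex.I * (d k - d l)) P * X k l := by
  induction P using Polynomial.induction_on generalizing X with
  | C a => simp [Algebra.algebraMap_eq_smul_one, Complex.real_smul]
  | add P Q hP hQ => simp [hP, hQ, add_mul]
  | monomial n a h =>
    rw [pow_succ, ← mul_assoc, map_mul (aeval (adDiagonal d)), aeval_X, Module.End.mul_apply, h,
      adDiagonal_apply_apply, map_mul (aeval _) _ Polynomial.X, aeval_X]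
    ring

lemma BracketClosed.le_comap_adDiagonal (hp : BracketClosed p) {d : ι → ℝ}
    (hd : diagonal (fun k => (d k : ℂ)) ∈ p) : p ≤ p.comap (adDiagonal d) :=
  fun X hX => hp _ hd X hX

theorem BracketClosed.sub_diagonal_diag_mem (hp : BracketClosed p) {G : Matrix ι ι ℂ}
    {d : ι → ℝ} (hG : G ∈ p) (hD : diagonal (fun k => (d k : ℂ)) ∈ p) (hGh : G.IsHermitian)
    (hGoff : ∀ k l, k ≠ l → G k l ≠ 0)
    (hd : Set.InjOn (fun x : ι × ι => d x.1 - d x.2) {x | x.1 ≠ x.2})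
    {X : Matrix ι ι ℂ} (hX : X.IsHermitian) : X - diagonal X.diag ∈ p := by
  set v : ι × ι → ℂ := fun x => Complex.I * (d x.1 - d x.2) with hv
  have hv_ne : ∀ x : ι × ι, x.1 ≠ x.2 → v x ≠ 0 := by
    intro x hx h
    have hdx : d x.1 = d x.2 := by
      simpa [hv, Complex.I_ne_zero, sub_eq_zero] using h
    have hswap : x = x.swap := hd hx (Ne.symm hx : x.swap.1 ≠ x.swap.2) (by simp [hdx])
    exact hx (congrArg Prod.fst hswap)
  have hv_inj : Set.InjOn v (Finset.univ.offDiag : Finset (ι × ι)) := by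
    intro x hx y hy hxy
    refine hd (by simpa using hx) (by simpa using hy) (show d x.1 - d x.2 = d y.1 - d y.2 from ?_)
    have hxy' : ((d x.1 - d x.2 : ℝ) : ℂ) = ((d y.1 - d y.2 : ℝ) : ℂ) := by
      push_cast
      simpa [hv, Complex.I_ne_zero] using hxy
    exact_mod_cast hxy'
  have hv_swap : ∀ x : ι × ι, v x.swap = conj (v x) := by
    intro x
    simp only [hv, Prod.fst_swap, Prod.snd_swap, map_mul, Complex.conj_I, map_sub,
      Complex.conj_ofReal]
    ring
  obtain ⟨P, hP⟩ := Polynomial.exists_aeval_real_eq_of_conj Finset.univ.offDiag hv_inj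
    (r := fun x => X x.1 x.2 / (v x * G x.1 x.2)) fun x hx =>
      ⟨x.swap, by simpa [eq_comm] using hx, hv_swap x, by
        simp only [Prod.fst_swap, Prod.snd_swap, hv_swap, ← hX.apply x.2 x.1,
          ← hGh.apply x.2 x.1, map_div₀, map_mul, Complex.star_def]⟩
  -- The factor `Polynomial.X` vanishes at the node `0` shared by all diagonal entries.
  have hP_eq : aeval (adDiagonal d) (Polynomial.X * P) G = X - diagonal X.diag := by
    ext k l
    rw [aeval_adDiagonal_apply_apply, map_mul, aeval_X]
    by_cases hkl : k = l
    · subst hkl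
      simp
    · have hP_kl := hP (k, l) (by simpa using hkl)
      simp only at hP_kl
      rw [hP_kl, sub_apply, diagonal_apply_ne _ hkl, sub_zero]
      field_simp [hv_ne (k, l) hkl, hGoff k l hkl]
      simp only [hv]
      ring
  rw [← hP_eq]
  exact Polynomial.aeval_apply_smul_mem_of_le_comap hG _ _ (hp.le_comap_adDiagonal hD)

lemma I_smul_commutator_single_add_single {k l : ι} (hkl : k ≠ l) :
    Complex.I • ((single k l 1 + single l k 1) * (single k l Complex.I + single l k (-Complex.I)) -
      (single k l Complex.I + single l k (-Complex.I)) * (single k l 1 + single l k 1)) =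
    (2 : ℝ) • (single k k (1 : ℂ) - single l l 1) := by
  simp only [add_mul, mul_add, single_mul_single_same, single_mul_single_of_ne, ne_eq, hkl,
    Ne.symm hkl, not_false_eq_true]
  ext i j
  simp [single_apply]
  split_ifs <;> simp_all <;> ring_nf <;> simp [Complex.I_sq]

theorem BracketClosed.single_sub_single_mem (hp : BracketClosed p)
    (hoff : ∀ X : Matrix ι ι ℂ, X.IsHermitian → X - diagonal X.diag ∈ p) (k l : ι) :
    single k k (1 : ℂ) - single l l 1 ∈ p := by
  rcases eq_or_ne k l with rfl | hkl
  · rw [sub_self]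
    exact p.zero_mem
  have hmem : ∀ a : ℂ, single k l a + single l k (conj a) ∈ p := fun a => by
    simpa [diag_single_add_single hkl] using hoff _ (isHermitian_single_add_single_conj k l a)
  have h2 := hp _ (by simpa using hmem 1) _ (by simpa using hmem Complex.I)
  rw [I_smul_commutator_single_add_single hkl] at h2
  simpa using p.smul_mem (2⁻¹ : ℝ) h2

theorem diagonal_ofReal_mem_of_single_sub_single_mem
    (h : ∀ k l : ι, single k k (1 : ℂ) - single l l 1 ∈ p) {d : ι → ℝ} (hd : ∑ k, d k = 0) :
    diagonal (fun k => (d k : ℂ)) ∈ p := by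
  rcases isEmpty_or_nonempty ι with hι | ⟨⟨z⟩⟩
  · rw [Subsingleton.elim (diagonal _) 0]
    exact p.zero_mem
  have hsum : diagonal (fun k => (d k : ℂ)) = ∑ k, d k • (single k k (1 : ℂ) - single z z 1) := by
    rw [Finset.sum_congr rfl fun k _ => smul_sub _ _ _, Finset.sum_sub_distrib,
      ← Finset.sum_smul, hd, zero_smul, sub_zero]
    simp only [smul_single, Complex.real_smul, mul_one, sum_single_eq_diagonal]
  rw [hsum]
  exact p.sum_mem fun k _ => p.smul_mem _ (h k z)

theorem BracketClosed.mem_of_isHermitian_of_trace_eq_zero (hp : BracketClosed p)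
    (hoff : ∀ X : Matrix ι ι ℂ, X.IsHermitian → X - diagonal X.diag ∈ p)
    {X : Matrix ι ι ℂ} (hX : X.IsHermitian) (htr : X.trace = 0) : X ∈ p := by
  have hdiag : diagonal X.diag = diagonal fun k => ((X k k).re : ℂ) := by
    congr 1
    ext k
    exact (Complex.conj_eq_iff_re.1 (hX.apply k k)).symm
  have hre : ∑ k, (X k k).re = 0 := by
    simpa [trace, Complex.re_sum] using congrArg Complex.re htr
  rw [← sub_add_cancel X (diagonal X.diag), hdiag]
  exact p.add_mem (hdiag ▸ hoff X hX)
    (diagonal_ofReal_mem_of_single_sub_single_mem (hp.single_sub_single_mem hoff) hre)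

end Matrix

section LieDynAlg

variable {N : ℕ} {H₁ H₂ : Matrix (Fin N) (Fin N) ℂ}

theorem LieDynAlg.left_mem : H₁ ∈ LieDynAlg H₁ H₂ :=
  Submodule.mem_sInf.2 fun _ hp => hp.1

theorem LieDynAlg.right_mem : H₂ ∈ LieDynAlg H₁ H₂ :=
  Submodule.mem_sInf.2 fun _ hp => hp.2.1

theorem LieDynAlg.bracketClosed : BracketClosed (LieDynAlg H₁ H₂) := fun A hA B hB =>
  Submodule.mem_sInf.2 fun p hp =>
    hp.2.2 A (Submodule.mem_sInf.1 hA p hp) B (Submodule.mem_sInf.1 hB p hp)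

theorem LieDynAlg_le {p : Submodule ℝ (Matrix (Fin N) (Fin N) ℂ)} (h₁ : H₁ ∈ p) (h₂ : H₂ ∈ p)
    (hp : BracketClosed p) : LieDynAlg H₁ H₂ ≤ p :=
  sInf_le ⟨h₁, h₂, hp⟩

theorem LieDynAlg.mem_of_isHermitian_of_trace_eq_zero (h₁ : H₁.IsHermitian) {lam : Fin N → ℝ}
    {ψ : Fin N → Fin N → ℂ} (horth : ∀ k l, star (ψ k) ⬝ᵥ ψ l = if k = l then 1 else 0)
    (heig : ∀ k, H₂ *ᵥ ψ k = (lam k : ℂ) • ψ k)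
    (hoffdiag : ∀ k l, k ≠ l → star (ψ l) ⬝ᵥ (H₁ *ᵥ ψ k) ≠ 0)
    (hgaps : Set.InjOn (fun x : Fin N × Fin N => lam x.1 - lam x.2) {x | x.1 ≠ x.2})
    {X : Matrix (Fin N) (Fin N) ℂ} (hX : X.IsHermitian) (htr : X.trace = 0) :
    X ∈ LieDynAlg H₁ H₂ := by
  set U := ofCols ψ
  set φ := Unitary.conjStarAlgAut ℂ _ (⟨U, ofCols_mem_unitaryGroup horth⟩ :
    unitaryGroup (Fin N) ℂ)
  have hφ_symm : ∀ Y, φ.symm Y = Uᴴ * Y * U := fun _ => rfl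
  -- `p` is `ℒ(H₁, H₂)` written in the eigenbasis `ψ` of `H₂`.
  set p := (LieDynAlg H₁ H₂).comap (φ.toAlgEquiv.toAlgHom.toLinearMap.restrictScalars ℝ)
  have hp : BracketClosed p := LieDynAlg.bracketClosed.comap _
  have hmem : ∀ Y, Uᴴ * Y * U ∈ p ↔ Y ∈ LieDynAlg H₁ H₂ := fun Y => by
    rw [← hφ_symm]
    show φ (φ.symm Y) ∈ LieDynAlg H₁ H₂ ↔ _
    rw [φ.apply_symm_apply]
  have hherm : ∀ Y : Matrix (Fin N) (Fin N) ℂ, Y.IsHermitian → (Uᴴ * Y * U).IsHermitian :=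
    fun Y hY => by
      rw [← hφ_symm, isHermitian_iff_isSelfAdjoint]
      exact hY.isSelfAdjoint.map φ.symm
  have hD : (diagonal fun k => (lam k : ℂ)) ∈ p := by
    rw [← conjTranspose_ofCols_mul_mul_ofCols_eq_diagonal horth heig, hmem]
    exact LieDynAlg.right_mem
  have hGoff : ∀ k l, k ≠ l → (Uᴴ * H₁ * U) k l ≠ 0 := fun k l hkl => by
    rw [conjTranspose_ofCols_mul_mul_ofCols_apply]
    exact hoffdiag l k hkl.symm
  have hoff : ∀ Y : Matrix (Fin N) (Fin N) ℂ, Y.IsHermitian → Y - diagonal Y.diag ∈ p :=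
    fun _ => hp.sub_diagonal_diag_mem ((hmem H₁).2 LieDynAlg.left_mem) hD (hherm H₁ h₁) hGoff hgaps
  rw [← hmem]
  refine hp.mem_of_isHermitian_of_trace_eq_zero hoff (hherm X hX) ?_
  rw [trace_mul_cycle, ← star_eq_conjTranspose,
    Unitary.mul_star_self_of_mem (ofCols_mem_unitaryGroup horth), Matrix.one_mul, htr]

end LieDynAlg

theorem stmt6_general {N : ℕ} (H₁ H₂ : Matrix (Fin N) (Fin N) ℂ)
    (h₁ : H₁.IsHermitian) (h₂ : H₂.IsHermitian)
    (lam : Fin N → ℝ) (ψ : Fin N → (Fin N → ℂ))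
    (horth : ∀ k l, dotProduct (star (ψ k)) (ψ l) = if k = l then 1 else 0)
    (heig : ∀ k, H₂ *ᵥ ψ k = (lam k : ℂ) • ψ k)
    (hoffdiag : ∀ k l, k ≠ l → dotProduct (star (ψ l)) (H₁ *ᵥ ψ k) ≠ 0)
    (hgaps : ∀ k l k' l' : Fin N, k ≠ l → k' ≠ l' → (k, l) ≠ (k', l') →
      lam k - lam l ≠ lam k' - lam l') :
    (H₁.trace = 0 ∧ H₂.trace = 0 →
      (LieDynAlg H₁ H₂ : Set (Matrix (Fin N) (Fin N) ℂ)) =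
        {A : Matrix (Fin N) (Fin N) ℂ | A.IsHermitian ∧ A.trace = 0}) ∧
    (¬ (H₁.trace = 0 ∧ H₂.trace = 0) →
      (LieDynAlg H₁ H₂ : Set (Matrix (Fin N) (Fin N) ℂ)) =
        {A : Matrix (Fin N) (Fin N) ℂ | A.IsHermitian}) := by
  have hinj : Set.InjOn (fun x : Fin N × Fin N => lam x.1 - lam x.2) {x | x.1 ≠ x.2} :=
    fun x hx y hy hxy => by_contra fun hne => hgaps x.1 x.2 y.1 y.2 hx hy hne hxy
  have hsu : ∀ X : Matrix (Fin N) (Fin N) ℂ, X.IsHermitian → X.trace = 0 →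
      X ∈ LieDynAlg H₁ H₂ := fun _ =>
    LieDynAlg.mem_of_isHermitian_of_trace_eq_zero h₁ horth heig hoffdiag hinj
  refine ⟨fun ⟨ht₁, ht₂⟩ => subset_antisymm (fun A hA => ?_) fun A hA => hsu A hA.1 hA.2,
    fun ht => subset_antisymm (fun A hA => ?_) fun A hA => ?_⟩
  · obtain ⟨hAh, hAt⟩ := LieDynAlg_le
      (p := selfAdjoint.submodule ℝ _ ⊓ LinearMap.ker ((traceLinearMap _ ℂ ℂ).restrictScalars ℝ))
      ⟨h₁.isSelfAdjoint, ht₁⟩ ⟨h₂.isSelfAdjoint, ht₂⟩ bracketClosed_selfAdjoint_inf_ker_trace hA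
    exact ⟨hAh.isHermitian, hAt⟩
  · exact (LieDynAlg_le (p := selfAdjoint.submodule ℝ _) h₁.isSelfAdjoint h₂.isSelfAdjoint
      bracketClosed_selfAdjoint hA).isHermitian
  · rcases not_and_or.1 ht with ht₁ | ht₂
    · exact mem_of_isHermitian_of_trace_ne_zero hsu LieDynAlg.left_mem h₁ ht₁ hA
    · exact mem_of_isHermitian_of_trace_ne_zero hsu LieDynAlg.right_mem h₂ ht₂ hA

/-- **Theorem (constructive controllability criterion).** Let `λ₁,…,λ_N` be the eigenvalues of
`H₂` with orthonormal eigenvectors `ψ₁,…,ψ_N`, and assume that all matrix elements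
`(H₁ψ_k,ψ_j)`, `k ≠ j`, are nonzero and that the differences `λ_k − λ_l` (`k ≠ l`) are
pairwise distinct. Then: if `Tr H₁ = Tr H₂ = 0`, the dynamical Lie algebra `ℒ(H₁,H₂)` equals
the set of traceless Hermitian operators; otherwise it equals the set of all Hermitian
operators. -/
theorem stmt6 {N : ℕ} (hN : 1 < N) (H₁ H₂ : Matrix (Fin N) (Fin N) ℂ)
    (h₁ : H₁.IsHermitian) (h₂ : H₂.IsHermitian)
    (lam : Fin N → ℝ) (ψ : Fin N → (Fin N → ℂ))
    (horth : ∀ k l, dotProduct (star (ψ k)) (ψ l) = if k = l then 1 else 0)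
    (heig : ∀ k, H₂ *ᵥ ψ k = (lam k : ℂ) • ψ k)
    (hoffdiag : ∀ k l, k ≠ l → dotProduct (star (ψ l)) (H₁ *ᵥ ψ k) ≠ 0)
    (hgaps : ∀ k l k' l' : Fin N, k ≠ l → k' ≠ l' → (k, l) ≠ (k', l') →
      lam k - lam l ≠ lam k' - lam l') :
    (H₁.trace = 0 ∧ H₂.trace = 0 →
      (LieDynAlg H₁ H₂ : Set (Matrix (Fin N) (Fin N) ℂ)) =
        {A : Matrix (Fin N) (Fin N) ℂ | A.IsHermitian ∧ A.trace = 0}) ∧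
    (¬ (H₁.trace = 0 ∧ H₂.trace = 0) →
      (LieDynAlg H₁ H₂ : Set (Matrix (Fin N) (Fin N) ℂ)) =
        {A : Matrix (Fin N) (Fin N) ℂ | A.IsHermitian}) :=
  stmt6_general H₁ H₂ h₁ h₂ lam ψ horth heig hoffdiag hgaps
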